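/- Every weakly l.f.g.u. weakly positive monoid 𝓗 = (H, ≼) such that every ≼-irreducible is a ≼-atom, is loft and hence FmF-atomic. -/

import Mathlib

open Pointwise

namespace FactPaper

/-- `u` is a `≼`-unit for the preorder-like relation `r` on a monoid. -/
def RUnit {M : Type*} [Monoid M] (r : M → M → Prop) (u : M) : Prop :=
  r u 1 ∧ r 1 u

/-- `u` is a `≼`-non-unit. -/
def RNonUnit {M : Type*} [Monoid M] (r : M → M → Prop) (u : M) : Prop :=
  ¬ RUnit r u

/-- The strict part `≺` of the relation `r`. -/
def RLt {M : Type*} (r : M → M → Prop) (x y : M) : Prop :=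
  r x y ∧ ¬ r y x

/-- `a` is a `≼`-irreducible. -/
def RIrred {M : Type*} [Monoid M] (r : M → M → Prop) (a : M) : Prop :=
  RNonUnit r a ∧
    ∀ y z : M, RNonUnit r y → RNonUnit r z → RLt r y a → RLt r z a → a ≠ y * z

/-- `a` is a `≼`-atom. -/
def RAtom {M : Type*} [Monoid M] (r : M → M → Prop) (a : M) : Prop :=
  RNonUnit r a ∧ ∀ y z : M, RNonUnit r y → RNonUnit r z → a ≠ y * z

/-- `a` is a `≼`-quark. -/
def RQuark {M : Type*} [Monoid M] (r : M → M → Prop) (a : M) : Prop :=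
  RNonUnit r a ∧ ¬ ∃ b : M, RNonUnit r b ∧ RLt r b a

/-- The divisibility preorder: `Dvd2 x y` iff `y ∈ M x M`. -/
def Dvd2 {M : Type*} [Monoid M] (x y : M) : Prop :=
  ∃ u v : M, y = u * x * v

/-- The restriction of a relation on `M` to a submonoid `K`. -/
def SubRel {M : Type*} [Monoid M] (r : M → M → Prop) (K : Submonoid M) (a b : K) : Prop :=
  r (a : M) (b : M)

/-- The preorder `⊑` on words induced by `r`: an injection of indices matching
`r`-equivalent letters. -/
def WordLe {M : Type*} (r : M → M → Prop) (l m : List M) : Prop :=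
  ∃ σ : Fin l.length ↪ Fin m.length,
    ∀ i : Fin l.length, r (l.get i) (m.get (σ i)) ∧ r (m.get (σ i)) (l.get i)

/-- `⊑`-equivalence of words. -/
def WordEquiv {M : Type*} (r : M → M → Prop) (l m : List M) : Prop :=
  WordLe r l m ∧ WordLe r m l

/-- `l` is a `≼`-factorization of `x`: a word of `≼`-irreducibles with product `x`. -/
def IsFac {M : Type*} [Monoid M] (r : M → M → Prop) (x : M) (l : List M) : Prop :=
  (∀ a ∈ l, RIrred r a) ∧ l.prod = x

/-- `l` is a minimal `≼`-factorization of `x`: a `⊑`-minimal `≼`-factorization. -/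
def IsMinFac {M : Type*} [Monoid M] (r : M → M → Prop) (x : M) (l : List M) : Prop :=
  IsFac r x l ∧ ∀ m : List M, IsFac r x m → WordLe r m l → WordLe r l m

/-- `l` is an atomic `≼`-factorization of `x`. -/
def IsAtomicFac {M : Type*} [Monoid M] (r : M → M → Prop) (x : M) (l : List M) : Prop :=
  (∀ a ∈ l, RAtom r a) ∧ l.prod = x

/-- `l` is a minimal atomic `≼`-factorization of `x`. -/
def IsMinAtomicFac {M : Type*} [Monoid M] (r : M → M → Prop) (x : M) (l : List M) : Prop :=
  IsMinFac r x l ∧ ∀ a ∈ l, RAtom r a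

/-- Every `≼`-non-unit is a non-empty product of `≼`-irreducibles. -/
def Factorable {M : Type*} [Monoid M] (r : M → M → Prop) : Prop :=
  ∀ x : M, RNonUnit r x →
    ∃ l : List M, l ≠ [] ∧ (∀ a ∈ l, RIrred r a) ∧ l.prod = x

/-- Every `≼`-non-unit is a non-empty product of `≼`-atoms. -/
def Atomic {M : Type*} [Monoid M] (r : M → M → Prop) : Prop :=
  ∀ x : M, RNonUnit r x →
    ∃ l : List M, l ≠ [] ∧ (∀ a ∈ l, RAtom r a) ∧ l.prod = x

/-- The premonoid `(M, r)` is finitely generated up to units. -/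
def IsFGU {M : Type*} [Monoid M] (r : M → M → Prop) : Prop :=
  ∃ A : Set M, A.Finite ∧
    Submonoid.closure
      {w : M | ∃ u a v : M, RUnit r u ∧ a ∈ A ∧ RUnit r v ∧ w = u * a * v} = ⊤

/-- The submonoid generated by the `∣_M`-divisors of `x` (ground monoid of the germ of a
premonoid at `x`). -/
def GermSub {M : Type*} [Monoid M] (x : M) : Submonoid M :=
  Submonoid.closure {y : M | Dvd2 y x}

/-- Membership in the smallest divisor-closed submonoid containing `x`. -/
inductive InDC {M : Type*} [Monoid M] (x : M) : M → Prop
  | base : InDC x x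
  | one : InDC x 1
  | mul {a b : M} : InDC x a → InDC x b → InDC x (a * b)
  | dvd {a b : M} : InDC x b → Dvd2 a b → InDC x a

/-- The smallest divisor-closed submonoid of `M` containing `x`. -/
def DCSub {M : Type*} [Monoid M] (x : M) : Submonoid M where
  carrier := {y : M | InDC x y}
  mul_mem' := fun ha hb => InDC.mul ha hb
  one_mem' := InDC.one

/-- `(M, r)` is a weakly positive monoid. -/
def WeaklyPositive {M : Type*} [Monoid M] (r : M → M → Prop) : Prop :=
  (∀ x u v : M, RUnit r u → RUnit r v → r (u * x * v) x) ∧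
    (∀ x a b : M, r x (a * x * b))

/-- `(M, r)` is locally of finite type (loft). -/
def IsLoft {M : Type*} [Monoid M] (r : M → M → Prop) : Prop :=
  ∀ x : M, RNonUnit r x →
    ∃ A : Set M, A.Finite ∧ A ⊆ {a : M | RIrred r a} ∧
      ∀ l : List M, IsFac r x l →
        ∃ m : List M, (∀ a ∈ m, a ∈ A) ∧ WordEquiv r l m

/-- `(M, r)` is BF-factorable. -/
def IsBFFactorable {M : Type*} [Monoid M] (r : M → M → Prop) : Prop :=
  ∀ x : M, RNonUnit r x →
    {n : ℕ | ∃ l : List M, IsFac r x l ∧ l.length = n}.Finite ∧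
      {n : ℕ | ∃ l : List M, IsFac r x l ∧ l.length = n}.Nonempty

/-- `(M, r)` is BmF-factorable. -/
def IsBmFFactorable {M : Type*} [Monoid M] (r : M → M → Prop) : Prop :=
  ∀ x : M, RNonUnit r x →
    {n : ℕ | ∃ l : List M, IsMinFac r x l ∧ l.length = n}.Finite ∧
      {n : ℕ | ∃ l : List M, IsMinFac r x l ∧ l.length = n}.Nonempty

/-- `(M, r)` is FF-factorable: modulo `⊑`-equivalence, every `≼`-non-unit has finitely
many (and at least one) `≼`-factorizations. -/
def IsFFFactorable {M : Type*} [Monoid M] (r : M → M → Prop) : Prop :=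
  ∀ x : M, RNonUnit r x →
    (∃ l : List M, IsFac r x l) ∧
      ∃ F : Set (List M), F.Finite ∧
        ∀ l : List M, IsFac r x l → ∃ m ∈ F, IsFac r x m ∧ WordEquiv r l m

/-- `(M, r)` is FmF-factorable. -/
def IsFmFFactorable {M : Type*} [Monoid M] (r : M → M → Prop) : Prop :=
  ∀ x : M, RNonUnit r x →
    (∃ l : List M, IsMinFac r x l) ∧
      ∃ F : Set (List M), F.Finite ∧
        ∀ l : List M, IsMinFac r x l → ∃ m ∈ F, IsMinFac r x m ∧ WordEquiv r l m

/-- `(M, r)` is FF-atomic. -/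
def IsFFAtomic {M : Type*} [Monoid M] (r : M → M → Prop) : Prop :=
  ∀ x : M, RNonUnit r x →
    (∃ l : List M, IsAtomicFac r x l) ∧
      ∃ F : Set (List M), F.Finite ∧
        ∀ l : List M, IsAtomicFac r x l → ∃ m ∈ F, IsAtomicFac r x m ∧ WordEquiv r l m

/-- `(M, r)` is FmF-atomic. -/
def IsFmFAtomic {M : Type*} [Monoid M] (r : M → M → Prop) : Prop :=
  ∀ x : M, RNonUnit r x →
    (∃ l : List M, IsMinAtomicFac r x l) ∧
      ∃ F : Set (List M), F.Finite ∧
        ∀ l : List M, IsMinAtomicFac r x l → ∃ m ∈ F, IsMinAtomicFac r x m ∧ WordEquiv r l m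

/-!
Fix a `≼`-non-unit `x`. By weak l.f.g.u., every divisor of `x` is a product of elements
`u * a * v` with `u`, `v` `≼`-units and `a` in a finite set `A`; such an element is
`≼`-equivalent to `a`. Since `≼`-units can be absorbed into neighbouring factors, a non-unit
divisor of `x` is even a product of non-unit elements of this form, so an atom dividing `x` is
itself of this form. As irreducibles are atoms, the letters of all factorizations of `x` lie in
the finitely many classes of `A`, which gives loftness at once.

Comparing words under `⊑` amounts to comparing their multisets of classes, and multisets over a
finite set are well-quasi-ordered (Dickson's lemma): hence minimal factorizations exist and there
are finitely many of them up to `⊑`-equivalence. That `x` has a factorization at all follows by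
induction on the number of elements of `A` strictly below a factor.
-/

theorem map_le_map_iff_exists_embedding {α β : Type*} (f : α → β) {l m : List α} :
    (l.map f : Multiset β) ≤ m.map f ↔
      ∃ σ : Fin l.length ↪ Fin m.length, ∀ i, f (l.get i) = f (m.get (σ i)) := by
  classical
  constructor
  · intro h
    have hsub : (l.map f).Subperm (m.map f) := Multiset.coe_le.1 h
    refine ⟨⟨fun i => Fin.cast (List.length_map f)
      (hsub.idxInj (Fin.cast (List.length_map f).symm i)), fun i j hij => ?_⟩, fun i => ?_⟩
    · simpa using hsub.idxInj_injective (Fin.cast_injective _ hij)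
    · have := hsub.getElem_idxInj_eq_getElem (i := Fin.cast (List.length_map f).symm i)
      simp only [List.getElem_map, Fin.val_cast] at this
      exact this.symm
  · rintro ⟨σ, hσ⟩
    have hcomp : (fun j => f (m.get j)) ∘ σ = fun i => f (l.get i) :=
      funext fun i => (hσ i).symm
    calc (l.map f : Multiset β)
        = (Finset.univ.map σ).val.map (fun j => f (m.get j)) := by
          rw [Finset.map_val, Multiset.map_map, hcomp]
          simp
      _ ≤ Finset.univ.val.map (fun j => f (m.get j)) :=
          Multiset.map_le_map (Finset.val_le_iff.2 (Finset.subset_univ _))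
      _ = m.map f := by simp

theorem isPWO_setOf_forall_mem {β : Type*} {T : Set β} (hT : T.Finite) :
    {s : Multiset β | ∀ q ∈ s, q ∈ T}.IsPWO := by
  classical
  have : Finite T := hT.to_subtype
  have : WellQuasiOrderedLE (Multiset T) :=
    (Finsupp.orderIsoMultiset (ι := T)).wellQuasiOrderedLE_iff.1 inferInstance
  refine ((Set.isPWO_of_wellQuasiOrderedLE (Set.univ : Set (Multiset T))).image_of_monotone
    (f := Multiset.map Subtype.val) fun _ _ h => Multiset.map_le_map h).mono ?_
  intro s hs
  lift s to Multiset T using hs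
  exact ⟨s, trivial, rfl⟩

section Preorder

variable {α : Type*} {r : α → α → Prop} [IsTrans α r]

theorem rLt_of_le_of_rLt {a b c : α} (hab : r a b) (hbc : RLt r b c) : RLt r a c :=
  ⟨_root_.trans hab hbc.1, fun hca => hbc.2 (_root_.trans hca hab)⟩

theorem ncard_rLt_lt {A : Set α} (hA : A.Finite) {a w z : α} (ha : a ∈ A)
    (hwa : AntisymmRel r w a) (hwz : RLt r w z) :
    {b ∈ A | RLt r b w}.ncard < {b ∈ A | RLt r b z}.ncard := by
  refine Set.ncard_lt_ncard ?_ (hA.subset fun b hb => hb.1)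
  have hsub : {b ∈ A | RLt r b w} ⊆ {b ∈ A | RLt r b z} := fun b hb =>
    ⟨hb.1, rLt_of_le_of_rLt hb.2.1 hwz⟩
  exact (Set.ssubset_iff_of_subset hsub).2
    ⟨a, ⟨ha, rLt_of_le_of_rLt hwa.2 hwz⟩, fun h => h.2.2 hwa.1⟩

end Preorder

section Words

variable {α : Type*} (r : α → α → Prop) [IsPreorder α r]

def wordClasses (l : List α) : Multiset (Antisymmetrization α r) :=
  l.map (toAntisymmetrization r)

variable {r}

theorem toAntisymmetrization_eq_iff {a b : α} :
    toAntisymmetrization r a = toAntisymmetrization r b ↔ AntisymmRel r a b :=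
  Quotient.eq

theorem wordLe_iff_wordClasses_le {l m : List α} :
    WordLe r l m ↔ wordClasses r l ≤ wordClasses r m := by
  simp only [wordClasses, map_le_map_iff_exists_embedding, toAntisymmetrization_eq_iff]
  rfl

theorem wordEquiv_iff_wordClasses_eq {l m : List α} :
    WordEquiv r l m ↔ wordClasses r l = wordClasses r m := by
  rw [WordEquiv, wordLe_iff_wordClasses_le, wordLe_iff_wordClasses_le, le_antisymm_iff]

theorem wordClasses_map {l : List α} {g : α → α} (hg : ∀ a ∈ l, AntisymmRel r (g a) a) :
    wordClasses r (l.map g) = wordClasses r l := by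
  simp only [wordClasses, List.map_map]
  congr 1
  exact List.map_congr_left fun a ha => toAntisymmetrization_eq_iff.2 (hg a ha)

end Words

section Factorizations

variable {M : Type*} [Monoid M] {r : M → M → Prop} {x : M}

theorem isFac_singleton {a : M} (ha : RIrred r a) : IsFac r a [a] := by
  simpa [IsFac] using ha

theorem IsFac.append {y z : M} {l m : List M} (hl : IsFac r y l) (hm : IsFac r z m) :
    IsFac r (y * z) (l ++ m) :=
  ⟨fun a ha => (List.mem_append.1 ha).elim (hl.1 a) (hm.1 a),
    by rw [List.prod_append, hl.2, hm.2]⟩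

theorem exists_isFac_prod {L : List M} (h : ∀ w ∈ L, ∃ l, IsFac r w l) :
    ∃ l, IsFac r L.prod l := by
  induction L with
  | nil => exact ⟨[], by simp [IsFac]⟩
  | cons w L ih =>
    obtain ⟨l, hl⟩ := h w List.mem_cons_self
    obtain ⟨m, hm⟩ := ih fun w' hw' => h w' (List.mem_cons_of_mem _ hw')
    exact ⟨l ++ m, hl.append hm⟩

theorem isMinAtomicFac_iff (hia : ∀ a : M, RIrred r a → RAtom r a) {l : List M} :
    IsMinAtomicFac r x l ↔ IsMinFac r x l :=
  ⟨And.left, fun h => ⟨h, fun a ha => hia a (h.1.1 a ha)⟩⟩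

variable [IsPreorder M r]

theorem isMinFac_iff_minimalFor {l : List M} :
    IsMinFac r x l ↔ MinimalFor (IsFac r x) (wordClasses r) l := by
  simp only [IsMinFac, MinimalFor, wordLe_iff_wordClasses_le]

variable {T : Set (Antisymmetrization M r)}

theorem isPWO_wordClasses_isFac (hT : T.Finite)
    (hxT : ∀ l, IsFac r x l → ∀ e ∈ l, toAntisymmetrization r e ∈ T) :
    (wordClasses r '' {l | IsFac r x l}).IsPWO := by
  refine (isPWO_setOf_forall_mem hT).mono ?_
  rintro _ ⟨l, hl, rfl⟩ q hq
  obtain ⟨e, he, rfl⟩ := List.mem_map.1 (Multiset.mem_coe.1 hq)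
  exact hxT l hl e he

theorem exists_isMinFac (hT : T.Finite)
    (hxT : ∀ l, IsFac r x l → ∀ e ∈ l, toAntisymmetrization r e ∈ T)
    (hx : ∃ l, IsFac r x l) : ∃ l, IsMinFac r x l := by
  obtain ⟨l, hl⟩ := (isPWO_wordClasses_isFac hT hxT).exists_minimalFor _ _ hx
  exact ⟨l, isMinFac_iff_minimalFor.2 hl⟩

theorem exists_finite_isMinFac_wordEquiv (hT : T.Finite)
    (hxT : ∀ l, IsFac r x l → ∀ e ∈ l, toAntisymmetrization r e ∈ T) :
    ∃ F : Set (List M), F.Finite ∧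
      ∀ l, IsMinFac r x l → ∃ m ∈ F, IsMinFac r x m ∧ WordEquiv r l m := by
  set S := wordClasses r '' {l | IsMinFac r x l}
  have hanti : IsAntichain (· ≤ ·) S := by
    rintro _ ⟨l, hl, rfl⟩ _ ⟨m, hm, rfl⟩ hne hle
    exact hne (le_antisymm hle ((isMinFac_iff_minimalFor.1 hm).2 hl.1 hle))
  have hS : S.Finite := hanti.finite_of_partiallyWellOrderedOn
    ((isPWO_wordClasses_isFac hT hxT).mono (Set.image_mono fun _ hl => hl.1))
  set pick := Function.invFunOn (wordClasses r) {l | IsMinFac r x l}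
  refine ⟨pick '' S, hS.image pick,
    fun l hl => ⟨pick (wordClasses r l), ⟨_, ⟨l, hl, rfl⟩, rfl⟩, ?_, ?_⟩⟩
  · exact Function.invFunOn_mem (f := wordClasses r) (s := {l | IsMinFac r x l}) ⟨l, hl, rfl⟩
  · exact wordEquiv_iff_wordClasses_eq.2 (Function.invFunOn_eq ⟨l, hl, rfl⟩).symm

theorem exists_finite_rIrred_wordEquiv (hT : T.Finite)
    (hxT : ∀ l, IsFac r x l → ∀ e ∈ l, toAntisymmetrization r e ∈ T) :
    ∃ A : Set M, A.Finite ∧ A ⊆ {a | RIrred r a} ∧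
      ∀ l, IsFac r x l → ∃ m, (∀ a ∈ m, a ∈ A) ∧ WordEquiv r l m := by
  set I := {a | RIrred r a}
  set pick := Function.invFunOn (toAntisymmetrization r) I
  refine ⟨pick '' (T ∩ toAntisymmetrization r '' I), (hT.inter_of_left _).image pick,
    ?_, fun l hl => ⟨l.map (pick ∘ toAntisymmetrization r), ?_, ?_⟩⟩
  · rintro _ ⟨q, ⟨-, hq⟩, rfl⟩
    exact Function.invFunOn_mem hq
  · intro a ha
    obtain ⟨e, he, rfl⟩ := List.mem_map.1 ha
    exact ⟨_, ⟨hxT l hl e he, e, hl.1 e he, rfl⟩, rfl⟩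
  · refine wordEquiv_iff_wordClasses_eq.2 (wordClasses_map fun e he => ?_).symm
    exact toAntisymmetrization_eq_iff.1 (Function.invFunOn_eq ⟨e, hl.1 e he, rfl⟩)

end Factorizations

section Divisibility

variable {M : Type*} [Monoid M]

theorem dvd2_refl (y : M) : Dvd2 y y := ⟨1, 1, by simp⟩

theorem Dvd2.trans {a b c : M} (hab : Dvd2 a b) (hbc : Dvd2 b c) : Dvd2 a c := by
  obtain ⟨u, v, rfl⟩ := hab
  obtain ⟨s, t, rfl⟩ := hbc
  exact ⟨s * u, v * t, by simp only [mul_assoc]⟩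

theorem dvd2_mul_right (p q : M) : Dvd2 p (p * q) := ⟨1, q, by simp⟩

theorem dvd2_mul_left (p q : M) : Dvd2 q (p * q) := ⟨p, 1, by simp⟩

theorem dvd2_prod_of_mem {L : List M} {w : M} (hw : w ∈ L) : Dvd2 w L.prod := by
  obtain ⟨s, t, rfl⟩ := List.append_of_mem hw
  exact ⟨s.prod, t.prod, by simp [mul_assoc]⟩

end Divisibility

namespace WeaklyPositive

variable {M : Type*} [Monoid M] {r : M → M → Prop}

theorem one_le (hwp : WeaklyPositive r) (y : M) : r 1 y := by
  simpa using hwp.2 1 y 1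

theorem rUnit_iff (hwp : WeaklyPositive r) {u : M} : RUnit r u ↔ r u 1 :=
  ⟨And.left, fun h => ⟨h, hwp.one_le u⟩⟩

theorem rUnit_one (hwp : WeaklyPositive r) : RUnit r (1 : M) :=
  hwp.rUnit_iff.2 (hwp.one_le 1)

theorem rUnit_mul (hwp : WeaklyPositive r) {u v : M} (hu : RUnit r u) (hv : RUnit r v) :
    RUnit r (u * v) :=
  hwp.rUnit_iff.2 (by simpa using hwp.1 1 u v hu hv)

theorem antisymmRel_mul_mul (hwp : WeaklyPositive r) {u v : M} (hu : RUnit r u)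
    (hv : RUnit r v) (a : M) :
    AntisymmRel r (u * a * v) a :=
  ⟨hwp.1 a u v hu hv, hwp.2 a u v⟩

theorem le_of_dvd2 (hwp : WeaklyPositive r) {y z : M} (h : Dvd2 y z) : r y z := by
  obtain ⟨u, v, rfl⟩ := h
  exact hwp.2 y u v

theorem rNonUnit_of_dvd2 [IsTrans M r] (hwp : WeaklyPositive r) {y z : M} (h : Dvd2 y z)
    (hy : RNonUnit r y) : RNonUnit r z :=
  fun hz => hy (hwp.rUnit_iff.2 (_root_.trans (hwp.le_of_dvd2 h) hz.1))

variable {S : Set M}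

theorem rUnit_or_mem_closure (hwp : WeaklyPositive r)
    (hS : ∀ u w v, RUnit r u → w ∈ S → RUnit r v → u * w * v ∈ S) {y : M}
    (hy : y ∈ Submonoid.closure S) :
    ∀ u v, RUnit r u → RUnit r v →
      RUnit r (u * y * v) ∨ u * y * v ∈ Submonoid.closure {w | w ∈ S ∧ RNonUnit r w} := by
  induction hy using Submonoid.closure_induction with
  | mem w hw =>
    intro u v hu hv
    by_cases h : RUnit r (u * w * v)
    · exact .inl h
    · exact .inr (Submonoid.subset_closure ⟨hS u w v hu hw hv, h⟩)
  | one => exact fun u v hu hv => .inl (by simpa using hwp.rUnit_mul hu hv)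
  | mul y z _ _ ihy ihz =>
    intro u v hu hv
    have hyz : u * (y * z) * v = (u * y * 1) * (1 * z * v) := by
      simp only [mul_one, one_mul, mul_assoc]
    rcases ihy u 1 hu hwp.rUnit_one with huy | huy
    · simpa [mul_assoc] using ihz (u * y) v (by simpa using huy) hv
    rcases ihz 1 v hwp.rUnit_one hv with hzv | hzv
    · simpa [mul_assoc] using ihy u (z * v) hu (by simpa using hzv)
    · exact .inr (hyz ▸ Submonoid.mul_mem _ huy hzv)

theorem exists_list_rNonUnit_of_mem_closure (hwp : WeaklyPositive r)
    (hS : ∀ u w v, RUnit r u → w ∈ S → RUnit r v → u * w * v ∈ S) {y : M}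
    (hy : y ∈ Submonoid.closure S) (hyu : RNonUnit r y) :
    ∃ L : List M, (∀ w ∈ L, w ∈ S ∧ RNonUnit r w) ∧ L.prod = y := by
  have := hwp.rUnit_or_mem_closure hS hy 1 1 hwp.rUnit_one hwp.rUnit_one
  simp only [one_mul, mul_one] at this
  exact Submonoid.exists_list_of_mem_closure (this.resolve_left hyu)

theorem exists_isFac_of_mem_closure [IsTrans M r] (hwp : WeaklyPositive r)
    (hS : ∀ u w v, RUnit r u → w ∈ S → RUnit r v → u * w * v ∈ S) {y : M}
    (hy : y ∈ Submonoid.closure S) (hyu : RNonUnit r y)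
    (h : ∀ w ∈ S, RNonUnit r w → Dvd2 w y → ∃ l, IsFac r w l) : ∃ l, IsFac r y l := by
  obtain ⟨L, hL, rfl⟩ := hwp.exists_list_rNonUnit_of_mem_closure hS hy hyu
  exact exists_isFac_prod fun w hw => h w (hL w hw).1 (hL w hw).2 (dvd2_prod_of_mem hw)

theorem mem_of_rAtom_of_mem_closure [IsTrans M r] (hwp : WeaklyPositive r)
    (hS : ∀ u w v, RUnit r u → w ∈ S → RUnit r v → u * w * v ∈ S) {e : M}
    (he : RAtom r e) (hmem : e ∈ Submonoid.closure S) : e ∈ S := by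
  obtain ⟨L, hL, rfl⟩ := hwp.exists_list_rNonUnit_of_mem_closure hS hmem he.1
  match L, hL, he with
  | [], _, he => exact absurd hwp.rUnit_one he.1
  | [w], hL, _ => simpa using (hL w (by simp)).1
  | w :: w' :: L, hL, he =>
    have hw' := (hL w' (by simp)).2
    exact absurd rfl (he.2 w _ (hL w (by simp)).2
      (hwp.rNonUnit_of_dvd2 (dvd2_prod_of_mem List.mem_cons_self) hw'))

end WeaklyPositive

section Germ

variable {M : Type*} [Monoid M] {r : M → M → Prop}

def unitSandwich (r : M → M → Prop) (A : Set M) : Set M :=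
  {w | ∃ u a v, RUnit r u ∧ a ∈ A ∧ RUnit r v ∧ w = u * a * v}

theorem WeaklyPositive.mul_mul_mem_unitSandwich (hwp : WeaklyPositive r) {A : Set M} :
    ∀ u w v, RUnit r u → w ∈ unitSandwich r A → RUnit r v →
      u * w * v ∈ unitSandwich r A := by
  rintro u _ v hu ⟨u', a, v', hu', ha, hv', rfl⟩ hv
  exact ⟨u * u', a, v' * v, hwp.rUnit_mul hu hu', ha, hwp.rUnit_mul hv' hv,
    by simp only [mul_assoc]⟩

theorem WeaklyPositive.exists_antisymmRel_of_mem_unitSandwich (hwp : WeaklyPositive r)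
    {A : Set M} {w : M} (hw : w ∈ unitSandwich r A) : ∃ a ∈ A, AntisymmRel r w a := by
  obtain ⟨u, a, v, hu, ha, hv, rfl⟩ := hw
  exact ⟨a, ha, hwp.antisymmRel_mul_mul hu hv a⟩

theorem exists_finite_unitSandwich_of_isFGU_germ {x : M} (h : IsFGU (SubRel r (GermSub x))) :
    ∃ A : Set M, A.Finite ∧ ∀ y, Dvd2 y x → y ∈ Submonoid.closure (unitSandwich r A) := by
  obtain ⟨A, hA, htop⟩ := h
  change Submonoid.closure (unitSandwich _ A) = ⊤ at htop
  refine ⟨Subtype.val '' A, hA.image _, fun y hy => ?_⟩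
  have hle : GermSub x ≤ Submonoid.closure (unitSandwich r (Subtype.val '' A)) :=
    calc GermSub x = (Submonoid.closure (unitSandwich (SubRel r (GermSub x)) A)).map
          (GermSub x).subtype := by rw [htop, ← MonoidHom.mrange_eq_map, Submonoid.mrange_subtype]
      _ = Submonoid.closure ((GermSub x).subtype '' unitSandwich (SubRel r (GermSub x)) A) :=
          MonoidHom.map_mclosure _ _
      _ ≤ _ := by
        refine Submonoid.closure_mono ?_
        rintro _ ⟨_, ⟨u, a, v, hu, ha, hv, rfl⟩, rfl⟩
        exact ⟨u, a, v, hu, ⟨a, ha, rfl⟩, hv, rfl⟩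
  exact hle (Submonoid.subset_closure hy)

theorem WeaklyPositive.exists_isFac_of_mem_unitSandwich [IsTrans M r] (hwp : WeaklyPositive r)
    {x : M} {A : Set M} (hA : A.Finite)
    (hx : ∀ y, Dvd2 y x → y ∈ Submonoid.closure (unitSandwich r A)) {z : M}
    (hz : z ∈ unitSandwich r A) (hzu : RNonUnit r z) (hzx : Dvd2 z x) : ∃ l, IsFac r z l := by
  induction hn : {b ∈ A | RLt r b z}.ncard using Nat.strong_induction_on generalizing z with
  | _ n ih =>
  by_cases hirr : RIrred r z
  · exact ⟨[z], isFac_singleton hirr⟩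
  obtain ⟨p, q, hpu, hqu, hpz, hqz, rfl⟩ :
      ∃ p q, RNonUnit r p ∧ RNonUnit r q ∧ RLt r p z ∧ RLt r q z ∧ z = p * q := by
    simpa [RIrred, hzu] using hirr
  have factor_below : ∀ d, Dvd2 d (p * q) → RNonUnit r d → RLt r d (p * q) →
      ∃ l, IsFac r d l := by
    intro d hdz hdu hd
    refine hwp.exists_isFac_of_mem_closure hwp.mul_mul_mem_unitSandwich (hx d (hdz.trans hzx))
      hdu fun w hw hwu hwd => ?_
    obtain ⟨a, ha, hwa⟩ := hwp.exists_antisymmRel_of_mem_unitSandwich hw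
    have hwz : RLt r w (p * q) := rLt_of_le_of_rLt (hwp.le_of_dvd2 hwd) hd
    exact ih _ (hn ▸ ncard_rLt_lt hA ha hwa hwz) hw hwu ((hwd.trans hdz).trans hzx) rfl
  obtain ⟨l, hl⟩ := factor_below p (dvd2_mul_right p q) hpu hpz
  obtain ⟨m, hm⟩ := factor_below q (dvd2_mul_left p q) hqu hqz
  exact ⟨l ++ m, hl.append hm⟩

theorem WeaklyPositive.exists_isFac_of_isFGU_germ [IsTrans M r] (hwp : WeaklyPositive r) {x : M}
    (hgerm : IsFGU (SubRel r (GermSub x))) (hxu : RNonUnit r x) : ∃ l, IsFac r x l := by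
  obtain ⟨A, hA, hx⟩ := exists_finite_unitSandwich_of_isFGU_germ hgerm
  exact hwp.exists_isFac_of_mem_closure hwp.mul_mul_mem_unitSandwich (hx x (dvd2_refl x)) hxu
    fun w hw hwu hwx => hwp.exists_isFac_of_mem_unitSandwich hA hx hw hwu hwx

theorem WeaklyPositive.exists_finite_classes_of_isFGU_germ [IsPreorder M r]
    (hwp : WeaklyPositive r) (hia : ∀ a : M, RIrred r a → RAtom r a) {x : M}
    (hgerm : IsFGU (SubRel r (GermSub x))) :
    ∃ T : Set (Antisymmetrization M r), T.Finite ∧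
      ∀ l, IsFac r x l → ∀ e ∈ l, toAntisymmetrization r e ∈ T := by
  obtain ⟨A, hA, hx⟩ := exists_finite_unitSandwich_of_isFGU_germ hgerm
  refine ⟨toAntisymmetrization r '' A, hA.image _, fun l hl e he => ?_⟩
  have he' : e ∈ unitSandwich r A :=
    hwp.mem_of_rAtom_of_mem_closure hwp.mul_mul_mem_unitSandwich (hia e (hl.1 e he))
      (hx e (hl.2 ▸ dvd2_prod_of_mem he))
  obtain ⟨a, ha, hea⟩ := hwp.exists_antisymmRel_of_mem_unitSandwich he'
  exact ⟨a, ha, toAntisymmetrization_eq_iff.2 hea.symm⟩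

end Germ

/-- Theorem 4.12. Every weakly l.f.g.u. weakly positive monoid
`(H, ≼)` in which every `≼`-irreducible is a `≼`-atom, is loft and hence FmF-atomic. -/
theorem stmt12 {H : Type*} [Monoid H] (r : H → H → Prop)
    (hrefl : Reflexive r) (htrans : Transitive r)
    (hwp : WeaklyPositive r)
    (hwlfgu : ∀ x : H, RNonUnit r x → IsFGU (SubRel r (GermSub x)))
    (hia : ∀ a : H, RIrred r a → RAtom r a) :
    IsLoft r ∧ IsFmFAtomic r := by
  have : IsPreorder H r := { refl := hrefl, trans := fun _ _ _ hab hbc => htrans hab hbc }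
  refine ⟨fun x hx => ?_, fun x hx => ?_⟩ <;>
    obtain ⟨T, hT, hxT⟩ := hwp.exists_finite_classes_of_isFGU_germ hia (hwlfgu x hx)
  · exact exists_finite_rIrred_wordEquiv hT hxT
  · simp only [isMinAtomicFac_iff hia]
    exact ⟨exists_isMinFac hT hxT (hwp.exists_isFac_of_isFGU_germ (hwlfgu x hx) hx),
      exists_finite_isMinFac_wordEquiv hT hxT⟩

end FactPaper
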